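/- Suppose s > d. If γ1 < 0 and γ2 < 0, then the zero solution is stable: for every ε ∈ (0,d0] there exist δ > 0 and t1 ≥ t0 such that every admissible solution with v(t1) ≤ δ satisfies v(t) ≤ ε for all t ≥ t1. If γ1 > 0, γ2 > 0 and m ≤ q, then the zero solution is unstable: there exist ε > 0 and t1 ≥ t0 such that for every δ ∈ (0,ε), every admissible solution with v(t1) = δ satisfies v(t) ≥ ε for some t ≥ t1. -/

import Mathlib

/-!
With `P = t^{-m/q} v^s`, `Q = t^{-n/q} v^d` and `g = min |γ1| |γ2|`, the remainder satisfies
`|ρ| ≤ M (P + Q)(v + t^{-1/q}) ≤ (g/2)(P + Q)` as long as `v + t^{-1/q} ≤ g/(2M)`, so in that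
region `v'` has the common sign of `γ1, γ2` and modulus at least `(g/2)(P + Q)`.
For negative `γi` a small level is therefore a barrier that `v` cannot cross upwards.
For positive `γi`, a solution staying in the region is nondecreasing, so `v ≥ δ = v(t1)` and
`v' ≥ (g/2) δ^s t^{-m/q} ≥ (g/2) δ^s / t` because `m ≤ q`; the resulting logarithmic growth
drives `v` out of the region.
-/

/-- An admissible solution of the reduced equation
`v'(t) = γ1·t^{−m/q}·v(t)^s + γ2·t^{−n/q}·v(t)^d + ρ(t)` on `[t0,∞)` with values
in `[0,d0]`, where
`|ρ(t)| ≤ M·(t^{−m/q}·v(t)^s + t^{−n/q}·v(t)^d)·(v(t) + t^{−1/q})`. -/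
def IsAdmissible2 (q m n s d : ℕ) (γ1 γ2 d0 t0 M : ℝ) (v : ℝ → ℝ) : Prop :=
  (∀ t ≥ t0, v t ∈ Set.Icc (0:ℝ) d0) ∧
  ∃ ρ : ℝ → ℝ,
    (∀ t ≥ t0, |ρ t| ≤
      M * (t ^ (-(m:ℝ)/(q:ℝ)) * v t ^ s + t ^ (-(n:ℝ)/(q:ℝ)) * v t ^ d)
        * (v t + t ^ (-(1:ℝ)/(q:ℝ)))) ∧
    (∀ t ≥ t0, HasDerivAt v
      (γ1 * t ^ (-(m:ℝ)/(q:ℝ)) * v t ^ s + γ2 * t ^ (-(n:ℝ)/(q:ℝ)) * v t ^ d + ρ t) t)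

open Set Filter Topology Real

lemma exists_forall_ge_rpow_neg_inv_le {q : ℕ} (hq : 0 < q) {η : ℝ} (hη : 0 < η) (a : ℝ) :
    ∃ t1 ≥ a, ∀ t ≥ t1, t ^ (-(1:ℝ) / q) ≤ η := by
  have hlim : Tendsto (fun t : ℝ => t ^ (-(1:ℝ) / q)) atTop (𝓝 0) := by
    simpa only [neg_div] using tendsto_rpow_neg_atTop (by positivity : (0:ℝ) < 1 / q)
  obtain ⟨t1, ht1⟩ := eventually_atTop.1 (hlim.eventually (eventually_le_nhds hη))
  exact ⟨max t1 a, le_max_right _ _, fun t ht => ht1 t ((le_max_left _ _).trans ht)⟩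

lemma le_of_hasDerivAt_neg_of_eq {v f' : ℝ → ℝ} {a b t : ℝ}
    (hderiv : ∀ x ≥ a, HasDerivAt v (f' x) x) (ha : v a ≤ b)
    (hlevel : ∀ x ≥ a, v x = b → f' x < 0) (ht : a ≤ t) : v t ≤ b :=
  image_le_of_deriv_right_lt_deriv_boundary (B := fun _ => b) (B' := fun _ => 0)
    (fun x hx => (hderiv x hx.1).continuousAt.continuousWithinAt)
    (fun x hx => (hderiv x hx.1).hasDerivWithinAt) ha (fun x => hasDerivAt_const x b)
    (fun x hx => hlevel x hx.1) ⟨ht, le_rfl⟩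

lemma monotoneOn_Ici_of_hasDerivAt_nonneg {v f' : ℝ → ℝ} {a : ℝ}
    (hderiv : ∀ x ≥ a, HasDerivAt v (f' x) x) (hf' : ∀ x ≥ a, 0 ≤ f' x) :
    MonotoneOn v (Ici a) :=
  monotoneOn_of_hasDerivWithinAt_nonneg (convex_Ici a)
    (fun x hx => (hderiv x hx).continuousAt.continuousWithinAt)
    (fun x hx => (hderiv x (interior_subset hx)).hasDerivWithinAt)
    (fun x hx => hf' x (interior_subset hx))

lemma exists_ge_le_of_div_le_hasDerivAt {v f' : ℝ → ℝ} {a K : ℝ} (ha : 0 < a) (hK : 0 < K)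
    (hderiv : ∀ x ≥ a, HasDerivAt v (f' x) x) (hf' : ∀ x ≥ a, K / x ≤ f' x) (B : ℝ) :
    ∃ x ≥ a, B ≤ v x := by
  have hmono : MonotoneOn (fun x => v x - K * log x) (Ici a) := by
    refine monotoneOn_Ici_of_hasDerivAt_nonneg (f' := fun x => f' x - K / x) (fun x hx => ?_)
      (fun x hx => sub_nonneg.2 (hf' x hx))
    rw [div_eq_mul_inv]
    exact (hderiv x hx).sub ((hasDerivAt_log (ha.trans_le hx).ne').const_mul K)
  have hlog : Tendsto (fun x => v a - K * log a + K * log x) atTop atTop :=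
    tendsto_atTop_add_const_left _ _ (tendsto_log_atTop.const_mul_atTop hK)
  obtain ⟨x, hxa, hBx⟩ := ((eventually_ge_atTop a).and (hlog.eventually_ge_atTop B)).exists
  have hvx : v a - K * log a ≤ v x - K * log x := hmono self_mem_Ici hxa hxa
  exact ⟨x, hxa, by linarith⟩

lemma inv_le_rpow_neg_div {x : ℝ} (hx : 1 ≤ x) {m q : ℕ} (hmq : m ≤ q) :
    x⁻¹ ≤ x ^ (-(m:ℝ) / q) := by
  rw [← rpow_neg_one, neg_div]
  exact rpow_le_rpow_of_exponent_le hx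
    (neg_le_neg (div_le_one_of_le₀ (by exact_mod_cast hmq) q.cast_nonneg))

lemma add_le_neg_half_of_abs_le {γ1 γ2 g M P Q w ρ : ℝ} (hM : 0 < M) (hP : 0 ≤ P)
    (hQ : 0 ≤ Q) (h1 : g ≤ -γ1) (h2 : g ≤ -γ2) (hρ : |ρ| ≤ M * (P + Q) * w)
    (hw : w ≤ g / (2 * M)) : γ1 * P + γ2 * Q + ρ ≤ -(g / 2 * (P + Q)) := by
  have hρ' : ρ ≤ g / 2 * (P + Q) := calc
    ρ ≤ M * (P + Q) * w := (le_abs_self ρ).trans hρ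
    _ ≤ M * (P + Q) * (g / (2 * M)) := by gcongr
    _ = g / 2 * (P + Q) := by field_simp
  linarith [mul_le_mul_of_nonneg_right h1 hP, mul_le_mul_of_nonneg_right h2 hQ]

lemma half_le_add_of_abs_le {γ1 γ2 g M P Q w ρ : ℝ} (hM : 0 < M) (hP : 0 ≤ P)
    (hQ : 0 ≤ Q) (h1 : g ≤ γ1) (h2 : g ≤ γ2) (hρ : |ρ| ≤ M * (P + Q) * w)
    (hw : w ≤ g / (2 * M)) : g / 2 * (P + Q) ≤ γ1 * P + γ2 * Q + ρ := by
  have := add_le_neg_half_of_abs_le (γ1 := -γ1) (γ2 := -γ2) (ρ := -ρ) hM hP hQ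
    (by linarith) (by linarith) (by rwa [abs_neg]) hw
  linarith

theorem IsAdmissible2.zero_stable {q m n s d : ℕ} (hq : 0 < q) {γ1 γ2 d0 t0 M : ℝ}
    (ht0 : 0 < t0) (hM : 0 < M) (hγ1 : γ1 < 0) (hγ2 : γ2 < 0) {ε : ℝ} (hε : 0 < ε) :
    ∃ δ > 0, ∃ t1 ≥ t0, ∀ v : ℝ → ℝ, IsAdmissible2 q m n s d γ1 γ2 d0 t0 M v →
      v t1 ≤ δ → ∀ t ≥ t1, v t ≤ ε := by
  set g := min (-γ1) (-γ2)
  have hg : 0 < g := lt_min (neg_pos.2 hγ1) (neg_pos.2 hγ2)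
  set c := g / (2 * M)
  have hc : 0 < c := by positivity
  obtain ⟨t1, ht1, hsmall⟩ := exists_forall_ge_rpow_neg_inv_le hq (half_pos hc) t0
  refine ⟨min ε (c / 2), lt_min hε (half_pos hc), t1, ht1, ?_⟩
  rintro v ⟨-, ρ, hρ, hode⟩ hvt1 t ht
  refine (le_of_hasDerivAt_neg_of_eq (fun x hx => hode x (ht1.trans hx)) hvt1 ?_ ht).trans
    (min_le_left _ _)
  intro x hx hvx
  have hx0 : 0 < x := ht0.trans_le (ht1.trans hx)
  have hv0 : 0 < v x := hvx ▸ lt_min hε (half_pos hc)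
  have hP : 0 < x ^ (-(m:ℝ) / q) * v x ^ s := by positivity
  have hQ : 0 ≤ x ^ (-(n:ℝ) / q) * v x ^ d := by positivity
  have hvc : v x ≤ c / 2 := hvx ▸ min_le_right _ _
  have hw : v x + x ^ (-(1:ℝ) / q) ≤ c := by linarith [hsmall x hx]
  have hF := add_le_neg_half_of_abs_le hM hP.le hQ (min_le_left _ _) (min_le_right _ _)
    (hρ x (ht1.trans hx)) hw
  rw [mul_assoc γ1, mul_assoc γ2]
  linarith [mul_pos (half_pos hg) (add_pos_of_pos_of_nonneg hP hQ)]

theorem IsAdmissible2.exists_hasDerivAt_ge {q m n s d : ℕ} {γ1 γ2 d0 t0 M g t1 : ℝ}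
    {v : ℝ → ℝ} (hv : IsAdmissible2 q m n s d γ1 γ2 d0 t0 M v) (hM : 0 < M)
    (hg : 0 ≤ g) (hγ1 : g ≤ γ1) (hγ2 : g ≤ γ2) (ht1 : t0 ≤ t1) (ht1pos : 0 < t1)
    (hsmall : ∀ x ≥ t1, v x + x ^ (-(1:ℝ) / q) ≤ g / (2 * M)) :
    ∃ F : ℝ → ℝ, ∀ x ≥ t1,
      HasDerivAt v (F x) x ∧ g / 2 * (x ^ (-(m:ℝ) / q) * v x ^ s) ≤ F x := by
  obtain ⟨hrange, ρ, hρ, hode⟩ := hv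
  refine ⟨_, fun x hx => ⟨hode x (ht1.trans hx), ?_⟩⟩
  have hx0 : 0 < x := ht1pos.trans_le hx
  have hv0 : 0 ≤ v x := (hrange x (ht1.trans hx)).1
  have hP : 0 ≤ x ^ (-(m:ℝ) / q) * v x ^ s := by positivity
  have hQ : 0 ≤ x ^ (-(n:ℝ) / q) * v x ^ d := by positivity
  have hF := half_le_add_of_abs_le hM hP hQ hγ1 hγ2 (hρ x (ht1.trans hx)) (hsmall x hx)
  rw [mul_assoc γ1, mul_assoc γ2]
  linarith [mul_nonneg (div_nonneg hg zero_le_two) hQ]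

theorem IsAdmissible2.zero_unstable {q m n s d : ℕ} (hq : 0 < q) (hmq : m ≤ q)
    {γ1 γ2 d0 t0 M : ℝ} (hM : 0 < M) (hγ1 : 0 < γ1) (hγ2 : 0 < γ2) :
    ∃ ε > 0, ∃ t1 ≥ t0, ∀ δ ∈ Ioo (0:ℝ) ε, ∀ v : ℝ → ℝ,
      IsAdmissible2 q m n s d γ1 γ2 d0 t0 M v → v t1 = δ → ∃ t ≥ t1, ε ≤ v t := by
  set g := min γ1 γ2
  have hg : 0 < g := lt_min hγ1 hγ2
  set c := g / (2 * M)
  have hc : 0 < c := by positivity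
  obtain ⟨t1, ht1, hsmall⟩ := exists_forall_ge_rpow_neg_inv_le hq (half_pos hc) (max t0 1)
  have ht1t0 : t0 ≤ t1 := (le_max_left _ _).trans ht1
  have ht1one : 1 ≤ t1 := (le_max_right _ _).trans ht1
  refine ⟨c / 2, half_pos hc, t1, ht1t0, ?_⟩
  rintro δ ⟨hδ, -⟩ v hv hvt1
  by_contra! hbelow
  obtain ⟨F, hF⟩ := hv.exists_hasDerivAt_ge hM hg.le (min_le_left _ _) (min_le_right _ _)
    ht1t0 (zero_lt_one.trans_le ht1one) fun x hx => by linarith [hsmall x hx, hbelow x hx]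
  have hF0 : ∀ y ≥ t1, 0 ≤ F y := by
    intro y hy
    have hy0 : 0 < y := zero_lt_one.trans_le (ht1one.trans hy)
    have hvy : 0 ≤ v y := (hv.1 y (ht1t0.trans hy)).1
    exact le_trans (by positivity) (hF y hy).2
  have hδv : ∀ y ≥ t1, δ ≤ v y := fun y hy =>
    hvt1 ▸ monotoneOn_Ici_of_hasDerivAt_nonneg (fun x hx => (hF x hx).1) hF0 self_mem_Ici hy hy
  have hgrowth : ∀ y ≥ t1, g / 2 * δ ^ s / y ≤ F y := by
    intro y hy
    have hy1 : 1 ≤ y := ht1one.trans hy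
    calc g / 2 * δ ^ s / y = g / 2 * (y⁻¹ * δ ^ s) := by ring
      _ ≤ g / 2 * (y ^ (-(m:ℝ) / q) * v y ^ s) := by
        gcongr
        · exact inv_le_rpow_neg_div hy1 hmq
        · exact hδv y hy
      _ ≤ F y := (hF y hy).2
  obtain ⟨x, hx, hεx⟩ := exists_ge_le_of_div_le_hasDerivAt (zero_lt_one.trans_le ht1one)
    (by positivity : 0 < g / 2 * δ ^ s) (fun y hy => (hF y hy).1) hgrowth (c / 2)
  exact (hbelow x hx).not_ge hεx

theorem stability_instability_s_gt_d_general
    (q m n s d : ℕ) (hq : 0 < q)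
    (γ1 γ2 d0 t0 M : ℝ)
    (ht0 : 0 < t0) (hM : 0 < M) :
    (γ1 < 0 → γ2 < 0 →
      ∀ ε ∈ Set.Ioc (0:ℝ) d0, ∃ δ > 0, ∃ t1 ≥ t0,
        ∀ v : ℝ → ℝ, IsAdmissible2 q m n s d γ1 γ2 d0 t0 M v → v t1 ≤ δ →
          ∀ t ≥ t1, v t ≤ ε) ∧
    (0 < γ1 → 0 < γ2 → m ≤ q →
      ∃ ε > 0, ∃ t1 ≥ t0, ∀ δ ∈ Set.Ioo (0:ℝ) ε,
        ∀ v : ℝ → ℝ, IsAdmissible2 q m n s d γ1 γ2 d0 t0 M v → v t1 = δ →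
          ∃ t ≥ t1, ε ≤ v t) :=
  ⟨fun hγ1 hγ2 _ hε => IsAdmissible2.zero_stable hq ht0 hM hγ1 hγ2 hε.1,
    fun hγ1 hγ2 hmq => IsAdmissible2.zero_unstable hq hmq hM hγ1 hγ2⟩

/-- the fully nonlinear case with `s > d`: stability when
`γ1 < 0` and `γ2 < 0`, instability when `γ1 > 0`, `γ2 > 0` and `m ≤ q`. -/
theorem stability_instability_s_gt_d
    (q m n s d : ℕ) (hq : 0 < q) (hm : 0 < m) (hmn : m < n)
    (hs : 2 ≤ s) (hd : 2 ≤ d) (hsd : d < s)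
    (γ1 γ2 d0 t0 M : ℝ) (hγ1 : γ1 ≠ 0) (hγ2 : γ2 ≠ 0)
    (hd0 : 0 < d0) (ht0 : 0 < t0) (hM : 0 < M) :
    (γ1 < 0 → γ2 < 0 →
      ∀ ε ∈ Set.Ioc (0:ℝ) d0, ∃ δ > 0, ∃ t1 ≥ t0,
        ∀ v : ℝ → ℝ, IsAdmissible2 q m n s d γ1 γ2 d0 t0 M v → v t1 ≤ δ →
          ∀ t ≥ t1, v t ≤ ε) ∧
    (0 < γ1 → 0 < γ2 → m ≤ q →
      ∃ ε > 0, ∃ t1 ≥ t0, ∀ δ ∈ Set.Ioo (0:ℝ) ε,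
        ∀ v : ℝ → ℝ, IsAdmissible2 q m n s d γ1 γ2 d0 t0 M v → v t1 = δ →
          ∃ t ≥ t1, ε ≤ v t) :=
  stability_instability_s_gt_d_general q m n s d hq γ1 γ2 d0 t0 M ht0 hM
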